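/- arXiv:1510.05113 — 8 statements merged into one kernel-verified Lean document; each statement's English description precedes it below -/
import Mathlib

section
/- Let H = (V,H) be a finite simplicial complex and suppose X ⊆ V is a transversal of the successive differences of a chain F₀ ⊂ F₁ ⊂ … ⊂ F_k of flats of H, i.e. X = {x₁,…,x_k} with x_i ∈ F_i \ F_{i−1} for each i. Then {x₁,…,x_i} ∈ H for every i = 0,…,k; in particular X ∈ H. -/
open scoped Classical

variable {V : Type}

def IsSC (faces : Set (Finset V)) : Prop :=
  (∀ v : V, ({v} : Finset V) ∈ faces) ∧
    ∀ ⦃X Y : Finset V⦄, X ∈ faces → Y ⊆ X → Y ∈ faces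

def IsFlat (faces : Set (Finset V)) (F : Set V) : Prop :=
  ∀ I ∈ faces, (I : Set V) ⊆ F → ∀ p ∉ F, insert p I ∈ faces

def cl (faces : Set (Finset V)) (X : Set V) : Set V :=
  ⋂₀ {F : Set V | IsFlat faces F ∧ X ⊆ F}

def BRep (faces : Set (Finset V)) : Prop :=
  ∀ X ∈ faces, ∃ (k : ℕ) (F : Fin (k + 1) → Set V) (x : Fin k → V),
    (∀ i, IsFlat faces (F i)) ∧ StrictMono F ∧ Function.Injective x ∧
    (∀ i : Fin k, x i ∈ F i.succ \ F i.castSucc) ∧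
    X = Finset.image x Finset.univ

def skel (faces : Set (Finset V)) : SimpleGraph V where
  Adj p q := p ≠ q ∧ ({p, q} : Finset V) ∈ faces
  symm := by
    constructor
    rintro p q ⟨h1, h2⟩
    exact ⟨h1.symm, by rwa [Finset.pair_comm]⟩
  loopless := by constructor; rintro p ⟨h, _⟩; exact h rfl

def flatGraph (faces : Set (Finset V)) : SimpleGraph V where
  Adj p q := p ≠ q ∧ cl faces {p, q} ≠ Set.univ
  symm := by
    constructor
    rintro p q ⟨h1, h2⟩
    exact ⟨h1.symm, by rwa [Set.pair_comm]⟩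
  loopless := by constructor; rintro p ⟨h, _⟩; exact h rfl

theorem IsSC.empty_mem [Nonempty V] {faces : Set (Finset V)} (hsc : IsSC faces) :
    ∅ ∈ faces :=
  hsc.2 (hsc.1 (Classical.arbitrary V)) (Finset.empty_subset _)

theorem Fin.filter_val_lt_succ {k i : ℕ} (hi : i < k) :
    Finset.univ.filter (fun j : Fin k => (j : ℕ) < i + 1) =
      insert ⟨i, hi⟩ (Finset.univ.filter fun j : Fin k => (j : ℕ) < i) := by
  ext j
  simp only [Finset.mem_filter, Finset.mem_univ, true_and, Finset.mem_insert, Fin.ext_iff]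
  omega

section Transversal

variable {k : ℕ} {F : Fin (k + 1) → Set V} {x : Fin k → V}

theorem image_filter_lt_subset (hchain : Monotone F) (hx : ∀ j : Fin k, x j ∈ F j.succ)
    {i : ℕ} (hi : i < k + 1) :
    ↑((Finset.univ.filter fun j : Fin k => (j : ℕ) < i).image x) ⊆ F ⟨i, hi⟩ := by
  intro v hv
  simp only [Finset.coe_image, Finset.coe_filter, Finset.mem_univ, true_and, Set.mem_image,
    Set.mem_ofPred_eq] at hv
  obtain ⟨j, hj, rfl⟩ := hv
  exact hchain (Fin.le_def.2 (Nat.succ_le_of_lt hj)) (hx j)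

/-- The prefix `x₀, …, x_{i-1}` lies in the flat `F i` while `x i` does not, so flatness
extends the face by `x i`. -/
theorem insert_image_filter_lt_mem {faces : Set (Finset V)}
    (hflat : ∀ i, IsFlat faces (F i)) (hchain : Monotone F)
    (hx : ∀ i : Fin k, x i ∈ F i.succ \ F i.castSucc) {i : ℕ} (hi : i < k)
    (hface : (Finset.univ.filter fun j : Fin k => (j : ℕ) < i).image x ∈ faces) :
    (Finset.univ.filter fun j : Fin k => (j : ℕ) < i + 1).image x ∈ faces := by
  rw [Fin.filter_val_lt_succ hi, Finset.image_insert]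
  exact hflat _ _ hface (image_filter_lt_subset hchain (fun j => (hx j).1) _) _ (hx ⟨i, hi⟩).2

end Transversal

theorem transversal_prefixes_are_faces_general [Nonempty V]
    {faces : Set (Finset V)} (hsc : IsSC faces)
    (k : ℕ) (F : Fin (k + 1) → Set V) (hflat : ∀ i, IsFlat faces (F i))
    (hchain : StrictMono F) (x : Fin k → V)
    (hx : ∀ i : Fin k, x i ∈ F i.succ \ F i.castSucc) :
    ∀ i : ℕ, i ≤ k →
      (Finset.univ.filter (fun j : Fin k => (j : ℕ) < i)).image x ∈ faces := by
  intro i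
  induction i with
  | zero =>
    intro _
    simpa using hsc.empty_mem
  | succ i ih =>
    intro hi
    exact insert_image_filter_lt_mem hflat hchain.monotone hx hi (ih (Nat.le_of_succ_le hi))

theorem transversal_prefixes_are_faces [Fintype V] [Nonempty V]
    {faces : Set (Finset V)} (hsc : IsSC faces)
    (k : ℕ) (F : Fin (k + 1) → Set V) (hflat : ∀ i, IsFlat faces (F i))
    (hchain : StrictMono F) (x : Fin k → V) (hinj : Function.Injective x)
    (hx : ∀ i : Fin k, x i ∈ F i.succ \ F i.castSucc) :
    ∀ i : ℕ, i ≤ k →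
      (Finset.univ.filter (fun j : Fin k => (j : ℕ) < i)).image x ∈ faces :=
  transversal_prefixes_are_faces_general hsc k F hflat hchain x hx
end

section
/- Let H = (V,H) be a boolean representable simplicial complex. Then for distinct p, q ∈ V, the pair {p,q} is not a face of H if and only if the closures of {p}, {p,q}, and {q} in the lattice of flats all coincide. -/
open scoped Classical

variable {V : Type}

/-!
If `{p, q}` is not a face, every flat containing `p` must contain `q` (otherwise adding `q` to the
face `{p}` would stay inside the complex), so `p` and `q` have the same closure as the pair.
Conversely, boolean representability gives every nonempty face `X` an element `x` outside the
closure of `X \ {x}` (the last element of the transversal lies outside the penultimate flat of the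
chain); for `X = {p, q}` this separates one of the points from the closure of the other.
-/

section Closure

variable {faces : Set (Finset V)}

lemma subset_cl (X : Set V) : X ⊆ cl faces X :=
  fun _ hx => Set.mem_sInter.2 fun _ hF => hF.2 hx

lemma cl_subset_of_isFlat {X F : Set V} (hF : IsFlat faces F) (hXF : X ⊆ F) : cl faces X ⊆ F :=
  Set.sInter_subset_of_mem ⟨hF, hXF⟩

lemma cl_mono {X Y : Set V} (h : X ⊆ Y) : cl faces X ⊆ cl faces Y :=
  Set.sInter_subset_sInter fun _ hF => ⟨hF.1, h.trans hF.2⟩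

lemma cl_subset_cl_of_subset_cl {X Y : Set V} (h : Y ⊆ cl faces X) : cl faces Y ⊆ cl faces X :=
  Set.subset_sInter fun _ hF => cl_subset_of_isFlat hF.1 (h.trans (Set.sInter_subset_of_mem hF))

lemma mem_cl_of_insert_notMem {X : Finset V} {q : V} (hX : X ∈ faces)
    (hqX : insert q X ∉ faces) : q ∈ cl faces X :=
  Set.mem_sInter.2 fun _ ⟨hF, hXF⟩ => by_contra fun hqF => hqX (hF X hX hXF q hqF)

lemma cl_singleton_eq_cl_pair_of_pair_notMem {p q : V} (hp : ({p} : Finset V) ∈ faces)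
    (hpq : ({p, q} : Finset V) ∉ faces) : cl faces {p} = cl faces ({p, q} : Set V) := by
  have hq : q ∈ cl faces {p} := by
    simpa using mem_cl_of_insert_notMem hp (by rwa [Finset.pair_comm] at hpq)
  refine (cl_mono (Set.singleton_subset_iff.2 (Set.mem_insert p {q}))).antisymm ?_
  exact cl_subset_cl_of_subset_cl
    (Set.insert_subset (subset_cl _ rfl) (Set.singleton_subset_iff.2 hq))

lemma BRep.exists_notMem_cl_sdiff (hbr : BRep faces) {X : Finset V} (hX : X ∈ faces)
    (hne : X.Nonempty) : ∃ x ∈ X, x ∉ cl faces ((X : Set V) \ {x}) := by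
  obtain ⟨k, F, x, hflat, hmono, -, hstep, rfl⟩ := hbr X hX
  obtain ⟨n, rfl⟩ : ∃ n, k = n + 1 :=
    Nat.exists_eq_add_one.2 (Nat.pos_of_ne_zero (by rintro rfl; simp at hne))
  refine ⟨x (Fin.last n), Finset.mem_image_of_mem x (Finset.mem_univ _), fun hmem => ?_⟩
  refine (hstep (Fin.last n)).2 (cl_subset_of_isFlat (hflat _) ?_ hmem)
  rintro _ ⟨hy, hy_ne⟩
  obtain ⟨i, -, rfl⟩ := Finset.mem_image.1 hy
  have hi : i < Fin.last n := Fin.lt_last_iff_ne_last.2 (by rintro rfl; exact hy_ne rfl)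
  exact hmono.monotone (Fin.succ_le_castSucc_iff.2 hi) (hstep i).1

end Closure

theorem pair_not_face_iff_closures_eq_general
    {faces : Set (Finset V)} (hsc : IsSC faces) (hbr : BRep faces)
    (p q : V) (hpq : p ≠ q) :
    ({p, q} : Finset V) ∉ faces ↔
      cl faces {p} = cl faces ({p, q} : Set V) ∧
        cl faces {q} = cl faces ({p, q} : Set V) := by
  refine ⟨fun hnf => ⟨cl_singleton_eq_cl_pair_of_pair_notMem (hsc.1 p) hnf, ?_⟩, ?_⟩
  · rw [Set.pair_comm]
    exact cl_singleton_eq_cl_pair_of_pair_notMem (hsc.1 q) (by rwa [Finset.pair_comm])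
  · rintro ⟨hp, hq⟩ hface
    obtain ⟨x, hx, hxcl⟩ := hbr.exists_notMem_cl_sdiff hface (Finset.insert_nonempty p {q})
    rw [Finset.mem_insert, Finset.mem_singleton] at hx
    rcases hx with rfl | rfl
    · rw [Finset.coe_pair, Set.pair_sdiff_left hpq, hq] at hxcl
      exact hxcl (subset_cl _ (Set.mem_insert x {q}))
    · rw [Finset.coe_pair, Set.pair_sdiff_right hpq, hp] at hxcl
      exact hxcl (subset_cl _ (Set.mem_insert_of_mem p rfl))

theorem pair_not_face_iff_closures_eq [Fintype V] [Nonempty V]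
    {faces : Set (Finset V)} (hsc : IsSC faces) (hbr : BRep faces)
    (p q : V) (hpq : p ≠ q) :
    ({p, q} : Finset V) ∉ faces ↔
      cl faces {p} = cl faces ({p, q} : Set V) ∧
        cl faces {q} = cl faces ({p, q} : Set V) :=
  pair_not_face_iff_closures_eq_general hsc hbr p q hpq
end

section
/- Let H = (V,H) be a boolean representable simplicial complex. Then H is connected (its 1-skeleton graph on vertex set V with edges the 2-element faces is a connected graph) unless H consists only of the singletons (H = P₁(V)) and |V| > 1. -/
open scoped Classical

variable {V : Type}

/-!
A face with two vertices `p, q` (and possibly more) is, by boolean representability, a transversal of a chain of flats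
`F₀ ⊂ F₁ ⊂ F₂ ⊂ ⋯` with `p ∈ F₁ \ F₀` and `q ∈ F₂ \ F₁`, so the flat `F₁` contains `p` but not `q`.
Since singletons are faces, the flat property makes every vertex of a flat adjacent to every vertex
outside it; hence every vertex is adjacent to `p` or to `q`, and `p` is adjacent to `q`.
-/

lemma IsFlat.skel_adj {faces : Set (Finset V)} (hsing : ∀ v : V, ({v} : Finset V) ∈ faces)
    {F : Set V} (hF : IsFlat faces F) {v w : V} (hv : v ∈ F) (hw : w ∉ F) :
    (skel faces).Adj v w := by
  refine ⟨by rintro rfl; exact hw hv, ?_⟩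
  rw [Finset.pair_comm]
  exact hF {v} (hsing v) (by simpa using hv) w hw

lemma skel_connected_of_isFlat {faces : Set (Finset V)}
    (hsing : ∀ v : V, ({v} : Finset V) ∈ faces) {F : Set V} (hF : IsFlat faces F)
    {a b : V} (ha : a ∈ F) (hb : b ∉ F) : (skel faces).Connected := by
  have hab : (skel faces).Reachable a b := (hF.skel_adj hsing ha hb).reachable
  have reach_b : ∀ v, (skel faces).Reachable v b := fun v => by
    by_cases hv : v ∈ F
    · exact (hF.skel_adj hsing hv hb).reachable
    · exact (hF.skel_adj hsing ha hv).symm.reachable.trans hab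
  have : Nonempty V := ⟨a⟩
  exact ⟨fun u v => (reach_b u).trans (reach_b v).symm⟩

lemma BRep.exists_isFlat_mem_not_mem {faces : Set (Finset V)} (hbr : BRep faces)
    {X : Finset V} (hX : X ∈ faces) (hcard : 1 < X.card) :
    ∃ F : Set V, IsFlat faces F ∧ ∃ a b, a ∈ F ∧ b ∉ F := by
  obtain ⟨k, F, x, hflat, -, hinj, hx, rfl⟩ := hbr X hX
  rw [Finset.card_image_of_injective _ hinj, Finset.card_univ, Fintype.card_fin] at hcard
  let i₀ : Fin k := ⟨0, by omega⟩
  let i₁ : Fin k := ⟨1, hcard⟩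
  have hi : i₀.succ = i₁.castSucc := rfl
  exact ⟨F i₀.succ, hflat _, x i₀, x i₁, (hx i₀).1, hi ▸ (hx i₁).2⟩

theorem brep_connected [Fintype V] [Nonempty V]
    {faces : Set (Finset V)} (hsc : IsSC faces) (hbr : BRep faces)
    (hnot : ¬ ((∀ X ∈ faces, X.card ≤ 1) ∧ 1 < Fintype.card V)) :
    (skel faces).Connected := by
  by_cases hV : 1 < Fintype.card V
  · obtain ⟨X, hX, hcard⟩ : ∃ X ∈ faces, 1 < X.card := by
      by_contra! h
      exact hnot ⟨h, hV⟩
    obtain ⟨F, hF, a, b, ha, hb⟩ := hbr.exists_isFlat_mem_not_mem hX hcard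
    exact skel_connected_of_isFlat hsc.1 hF ha hb
  · have := Fintype.card_le_one_iff_subsingleton.mp (not_lt.mp hV)
    exact .of_subsingleton
end

section
/- Let H = (V,H) be a connected boolean representable simplicial complex, and let Γ be its graph of flats (vertex set V, with an edge p—q whenever p ≠ q and cl({p,q}) ≠ V). If u and v lie in distinct connected components of Γ, then {u,v} ∈ H. -/
open scoped Classical

variable {V : Type}

/-!
If `{u, v}` were not a face, every flat through `u` would also contain `v`; since `cl {u, v} = V`
(no edge `u — v` in the graph of flats), the only flat through `u` is `V`. The points lying in no
proper flat form a flat: boolean representability puts one element of every face of size at least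
two into a proper flat, so this set carries only faces of size at most one, and a point outside
it lies in a proper flat missing any given point of the set. This flat contains `u`, hence is all
of `V`, so `H` has no edges, contradicting connectedness.
-/

section

variable {faces : Set (Finset V)}

theorem cl_eq_univ_iff {X : Set V} :
    cl faces X = Set.univ ↔ ∀ G, IsFlat faces G → X ⊆ G → G = Set.univ := by
  simp only [cl, Set.sInter_eq_univ, Set.mem_ofPred_eq, and_imp]

def spanningPoints (faces : Set (Finset V)) : Set V :=
  {x | cl faces {x} = Set.univ}

theorem mem_spanningPoints_iff {x : V} :
    x ∈ spanningPoints faces ↔ ∀ G, IsFlat faces G → x ∈ G → G = Set.univ := by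
  simp only [spanningPoints, Set.mem_ofPred_eq, cl_eq_univ_iff, Set.singleton_subset_iff]

theorem IsFlat.insert_singleton_mem {G : Set V} (hG : IsFlat faces G) {x y : V}
    (hx : ({x} : Finset V) ∈ faces) (hxG : x ∈ G) (hyG : y ∉ G) :
    ({x, y} : Finset V) ∈ faces := by
  rw [Finset.pair_comm]
  exact hG {x} hx (by simpa using hxG) y hyG

theorem BRep.exists_mem_not_mem_spanningPoints (hbr : BRep faces) {I : Finset V}
    (hI : I ∈ faces) (hcard : 2 ≤ I.card) : ∃ a ∈ I, a ∉ spanningPoints faces := by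
  obtain ⟨k, F, x, hflat, hmono, hinj, hmem, rfl⟩ := hbr I hI
  rw [Finset.card_image_of_injective _ hinj, Finset.card_univ, Fintype.card_fin] at hcard
  let i₀ : Fin k := ⟨0, by omega⟩
  refine ⟨x i₀, Finset.mem_image_of_mem x (Finset.mem_univ _), fun hx => ?_⟩
  -- `F 1` is a flat through `x 0`, and it is proper because `F 1 ⊂ F k` as `k ≥ 2`.
  have hproper : F i₀.succ ⊂ F (Fin.last k) :=
    hmono (by simp only [i₀, Fin.succ_mk, Fin.lt_def, Fin.val_last]; omega)
  rw [mem_spanningPoints_iff.1 hx _ (hflat _) (hmem i₀).1] at hproper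
  exact hproper.not_subset (Set.subset_univ _)

theorem BRep.card_le_one_of_subset_spanningPoints (hbr : BRep faces) {I : Finset V}
    (hI : I ∈ faces) (hsub : (I : Set V) ⊆ spanningPoints faces) : I.card ≤ 1 := by
  by_contra! hcard
  obtain ⟨a, ha, hna⟩ := hbr.exists_mem_not_mem_spanningPoints hI hcard
  exact hna (hsub ha)

theorem isFlat_spanningPoints (hsing : ∀ v : V, ({v} : Finset V) ∈ faces) (hbr : BRep faces) :
    IsFlat faces (spanningPoints faces) := by
  intro I hI hIsub q hq
  obtain ⟨G, hG, hqG, hGne⟩ : ∃ G, IsFlat faces G ∧ q ∈ G ∧ G ≠ Set.univ := by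
    simpa [mem_spanningPoints_iff] using hq
  have : Nonempty V := ⟨q⟩
  rcases Finset.card_le_one_iff_subset_singleton.1
      (hbr.card_le_one_of_subset_spanningPoints hI hIsub) with ⟨s, hIs⟩
  rcases Finset.subset_singleton_iff.1 hIs with rfl | rfl
  · simpa using hsing q
  · have hsG : s ∉ G := fun hs => hGne (mem_spanningPoints_iff.1 (hIsub (by simp)) G hG hs)
    exact hG.insert_singleton_mem (hsing q) hqG hsG

theorem mem_spanningPoints_of_pair_not_mem (hsing : ∀ v : V, ({v} : Finset V) ∈ faces) {u v : V}
    (hface : ({u, v} : Finset V) ∉ faces) (hcl : cl faces {u, v} = Set.univ) :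
    u ∈ spanningPoints faces := by
  refine mem_spanningPoints_iff.2 fun G hG hu => cl_eq_univ_iff.1 hcl G hG ?_
  have hv : v ∈ G := by
    by_contra hv
    exact hface (hG.insert_singleton_mem (hsing u) hu hv)
  exact Set.insert_subset hu (Set.singleton_subset_iff.2 hv)

end

theorem distinct_flat_components_pair_face_general
    {faces : Set (Finset V)} (hsc : IsSC faces) (hbr : BRep faces)
    (hconn : (skel faces).Connected) (u v : V)
    (hsep : ¬ (flatGraph faces).Reachable u v) :
    ({u, v} : Finset V) ∈ faces := by
  by_contra hface
  have huv : u ≠ v := by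
    rintro rfl
    exact hface (by simpa using hsc.1 u)
  have hcl : cl faces {u, v} = Set.univ := by
    by_contra hne
    exact hsep (SimpleGraph.Adj.reachable ⟨huv, hne⟩)
  have hu := mem_spanningPoints_of_pair_not_mem hsc.1 hface hcl
  have hall : spanningPoints faces = Set.univ :=
    mem_spanningPoints_iff.1 hu _ (isFlat_spanningPoints hsc.1 hbr) hu
  have : Nontrivial V := ⟨u, v, huv⟩
  obtain ⟨w, huw, hpair⟩ := hconn.preconnected.exists_adj_of_nontrivial u
  have hcard := hbr.card_le_one_of_subset_spanningPoints hpair (by simp [hall])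
  rw [Finset.card_pair huw] at hcard
  omega

theorem distinct_flat_components_pair_face [Fintype V] [Nonempty V]
    {faces : Set (Finset V)} (hsc : IsSC faces) (hbr : BRep faces)
    (hconn : (skel faces).Connected) (u v : V)
    (hsep : ¬ (flatGraph faces).Reachable u v) :
    ({u, v} : Finset V) ∈ faces :=
  distinct_flat_components_pair_face_general hsc hbr hconn u v hsep
end

section
/- Let H = (V,H) be a boolean representable simplicial complex, let τ ⊆ η be an equivalence relation on V (where a η b iff cl({a}) = cl({b})), let φ: V → V/τ be the projection, and define H/τ = { {a₁τ,…,a_kτ} : a₁…a_k ∈ H }. Then dim(H/τ) = dim(H). -/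
open scoped Classical

variable {V : Type}

def quotFaces (faces : Set (Finset V)) (τ : Setoid V) :
    Set (Finset (Quotient τ)) :=
  {Y | ∃ X ∈ faces, Y = X.image (Quotient.mk τ)}
noncomputable def dimSC {W : Type} (faces : Set (Finset W)) : ℕ :=
  sSup {n : ℕ | ∃ X ∈ faces, X.card = n + 1}

/-! In a boolean representable complex two distinct points of a face have distinct closures:
writing the face as a transversal `x₀, …, x_{k-1}` of a chain of flats `F₀ ⊂ ⋯ ⊂ F_k`, for `i < j`
the flat `F_j` contains `x_i` (hence `cl {x_i}`) but not `x_j`. Since `τ ⊆ η`, the projection is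
therefore injective on every face, so faces and their images have the same sizes. -/

section Closure

variable {faces : Set (Finset V)}

lemma notMem_cl_singleton_of_lt {k : ℕ} {F : Fin (k + 1) → Set V} {x : Fin k → V}
    (hflat : ∀ i, IsFlat faces (F i)) (hmono : Monotone F)
    (hstep : ∀ i, x i ∈ F i.succ \ F i.castSucc) {i j : Fin k} (hij : i < j) :
    x j ∉ cl faces {x i} := fun hxj =>
  have hxi : x i ∈ F j.castSucc := hmono (Fin.succ_le_castSucc_iff.mpr hij) (hstep i).1
  (hstep j).2 (cl_subset_of_isFlat (hflat _) (Set.singleton_subset_iff.mpr hxi) hxj)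

lemma BRep.injOn_cl_singleton (hbr : BRep faces) {X : Finset V} (hX : X ∈ faces) :
    Set.InjOn (fun a => cl faces {a}) X := by
  obtain ⟨k, F, x, hflat, hmono, -, hstep, rfl⟩ := hbr X hX
  have hne : ∀ {i j : Fin k}, i < j → cl faces {x i} ≠ cl faces {x j} := fun hij hcl =>
    notMem_cl_singleton_of_lt hflat hmono.monotone hstep hij
      (hcl ▸ subset_cl _ (Set.mem_singleton _))
  rintro _ ha _ hb hcl
  obtain ⟨i, -, rfl⟩ := Finset.mem_image.mp ha
  obtain ⟨j, -, rfl⟩ := Finset.mem_image.mp hb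
  rcases lt_trichotomy i j with hij | rfl | hji
  · exact absurd hcl (hne hij)
  · rfl
  · exact absurd hcl.symm (hne hji)

end Closure

lemma dimSC_quotFaces_eq_of_injOn {faces : Set (Finset V)} (τ : Setoid V)
    (hinj : ∀ X ∈ faces, Set.InjOn (Quotient.mk τ) X) :
    dimSC (quotFaces faces τ) = dimSC faces := by
  have hcard : ∀ X ∈ faces, (X.image (Quotient.mk τ)).card = X.card :=
    fun X hX => Finset.card_image_of_injOn (hinj X hX)
  unfold dimSC
  congr 1
  ext n
  constructor
  · rintro ⟨_, ⟨X, hX, rfl⟩, hn⟩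
    exact ⟨X, hX, hcard X hX ▸ hn⟩
  · rintro ⟨X, hX, hn⟩
    exact ⟨_, ⟨X, hX, rfl⟩, (hcard X hX).trans hn⟩

theorem dim_quot_eq_general
    {faces : Set (Finset V)} (hbr : BRep faces)
    (τ : Setoid V) (hτ : ∀ a b : V, τ.r a b → cl faces {a} = cl faces {b}) :
    dimSC (quotFaces faces τ) = dimSC faces :=
  dimSC_quotFaces_eq_of_injOn τ fun _ hX _ ha _ hb hab =>
    hbr.injOn_cl_singleton hX ha hb (hτ _ _ (Quotient.exact hab))

theorem dim_quot_eq [Fintype V] [Nonempty V]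
    {faces : Set (Finset V)} (hsc : IsSC faces) (hbr : BRep faces)
    (τ : Setoid V) (hτ : ∀ a b : V, τ.r a b → cl faces {a} = cl faces {b}) :
    dimSC (quotFaces faces τ) = dimSC faces :=
  dim_quot_eq_general hbr τ hτ
end

section
/- Let H = (V,H) be a boolean representable simplicial complex, let τ ⊆ η be an equivalence relation on V, let φ: V → V/τ be the projection, and let H/τ be the quotient complex with faces { Xφ : X ∈ H }. Then the flats of H are exactly the preimages under φ of the flats of H/τ: Fl(H) = { Fφ⁻¹ : F ∈ Fl(H/τ) }. -/
open scoped Classical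

variable {V : Type}

/-!
A flat is a union of η-classes, hence of τ-classes, so it is the preimage of its own image in
`V/τ`, and that image is a flat of `H/τ`.

Conversely let `G` be a flat of `H/τ`, `I ∈ H` with `Iφ ⊆ G`, and `p ∉ Gφ⁻¹`. Flatness of `G`
gives a face `Z` with `Zφ = (I ∪ {p})φ`. In a boolean representable complex the points of a face
lie at distinct levels of a chain of flats, and the level of a point depends only on its η-class.
Hence φ is injective on faces, `I ∪ {p}` injects into `Z` along η, and placing its points at the
levels of their partners in `Z` shows that it is a face.
-/

variable {faces : Set (Finset V)}

lemma IsFlat.mem_of_cl_eq {F : Set V} (hF : IsFlat faces F) {a b : V}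
    (h : cl faces {a} = cl faces {b}) (ha : a ∈ F) : b ∈ F := by
  have hclF : cl faces {a} ⊆ F := Set.sInter_subset_of_mem ⟨hF, by simpa using ha⟩
  have hb : b ∈ cl faces {b} := Set.mem_sInter.mpr fun _ hS => hS.2 rfl
  exact hclF (h ▸ hb)

lemma mem_sdiff_of_cl_eq {F₁ F₂ : Set V} (h₁ : IsFlat faces F₁) (h₂ : IsFlat faces F₂) {a b : V}
    (h : cl faces {a} = cl faces {b}) (ha : a ∈ F₁ \ F₂) : b ∈ F₁ \ F₂ :=
  ⟨h₁.mem_of_cl_eq h ha.1, fun hb => ha.2 (h₂.mem_of_cl_eq h.symm hb)⟩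

lemma Monotone.eq_of_mem_sdiff_succ {k : ℕ} {F : Fin (k + 1) → Set V} (hmono : Monotone F)
    {y : V} {i j : Fin k} (hi : y ∈ F i.succ \ F i.castSucc) (hj : y ∈ F j.succ \ F j.castSucc) :
    i = j := by
  by_contra hne
  rcases lt_or_gt_of_ne hne with hij | hji
  · exact hj.2 (hmono (Fin.succ_le_castSucc_iff.2 hij) hi.1)
  · exact hi.2 (hmono (Fin.succ_le_castSucc_iff.2 hji) hj.1)

lemma mem_faces_of_levels (hempty : ∅ ∈ faces) {k : ℕ} {F : Fin (k + 1) → Set V}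
    (hflat : ∀ i, IsFlat faces (F i)) (hmono : Monotone F) {Y : Finset V} (level : V → Fin k)
    (hinj : Set.InjOn level Y) (hmem : ∀ y ∈ Y, y ∈ F (level y).succ \ F (level y).castSucc) :
    Y ∈ faces := by
  suffices ∀ s ⊆ Y, s ∈ faces from this Y subset_rfl
  intro s
  induction s using Finset.induction_on_max_value level with
  | empty => exact fun _ => hempty
  | insert a s has hmax ih =>
    intro hs
    have haY : a ∈ Y := hs (Finset.mem_insert_self a s)
    have hsY : s ⊆ Y := (Finset.subset_insert a s).trans hs
    have hlt : ∀ x ∈ s, level x < level a := fun x hx =>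
      (hmax x hx).lt_of_ne fun h => has (hinj (hsY hx) haY h ▸ hx)
    have hsF : (s : Set V) ⊆ F (level a).castSucc := fun x hx =>
      hmono (Fin.succ_le_castSucc_iff.2 (hlt x hx)) (hmem x (hsY hx)).1
    exact hflat _ s (ih hsY) hsF a (hmem a haY).2

namespace BRep

lemma injOn_cl (hbr : BRep faces) {X : Finset V} (hX : X ∈ faces) :
    Set.InjOn (fun v => cl faces {v}) X := by
  obtain ⟨k, F, x, hflat, hsm, -, hx, rfl⟩ := hbr X hX
  rintro _ ha _ hb hab
  obtain ⟨i, -, rfl⟩ := Finset.mem_image.mp ha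
  obtain ⟨j, -, rfl⟩ := Finset.mem_image.mp hb
  have hj : x j ∈ F i.succ \ F i.castSucc := mem_sdiff_of_cl_eq (hflat _) (hflat _) hab (hx i)
  rw [hsm.monotone.eq_of_mem_sdiff_succ hj (hx j)]

lemma mem_of_injOn (hbr : BRep faces) (hempty : ∅ ∈ faces) {Z Y : Finset V} (hZ : Z ∈ faces)
    {f : V → V} (hmaps : Set.MapsTo f Y Z) (hinj : Set.InjOn f Y)
    (hcl : ∀ y ∈ Y, cl faces {f y} = cl faces {y}) : Y ∈ faces := by
  obtain ⟨k, F, x, hflat, hsm, -, hx, rfl⟩ := hbr Z hZ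
  have hlevel : ∀ y ∈ Y, ∃ i, x i = f y := fun y hy => by
    simpa using hmaps hy
  rcases Y.eq_empty_or_nonempty with rfl | ⟨y₀, hy₀⟩
  · exact hempty
  have : Nonempty (Fin k) := ⟨(hlevel y₀ hy₀).choose⟩
  choose! level hlevel using hlevel
  refine mem_faces_of_levels hempty hflat hsm.monotone level (fun a ha b hb h => ?_) fun y hy => ?_
  · exact hinj ha hb (by rw [← hlevel a ha, ← hlevel b hb, h])
  · have hfy := hx (level y)
    rw [hlevel y hy] at hfy
    exact mem_sdiff_of_cl_eq (hflat _) (hflat _) (hcl y hy) hfy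

end BRep

section Quotient

variable {τ : Setoid V} (hτ : ∀ a b : V, τ.r a b → cl faces {a} = cl faces {b})
include hτ

lemma IsFlat.preimage_image_quotient_eq {F : Set V} (hF : IsFlat faces F) :
    Quotient.mk τ ⁻¹' (Quotient.mk τ '' F) = F := by
  refine Set.Subset.antisymm ?_ (Set.subset_preimage_image _ _)
  rintro v ⟨b, hb, hbv⟩
  exact hF.mem_of_cl_eq (hτ b v (Quotient.exact hbv)) hb

lemma IsFlat.image_quotient {F : Set V} (hF : IsFlat faces F) :
    IsFlat (quotFaces faces τ) (Quotient.mk τ '' F) := by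
  rintro _ ⟨X, hX, rfl⟩ hXF q hq
  obtain ⟨p, rfl⟩ := q.exists_rep
  have hXF' : (X : Set V) ⊆ F := by
    rw [← hF.preimage_image_quotient_eq hτ, ← Set.image_subset_iff]
    simpa using hXF
  exact ⟨insert p X, hF X hX hXF' p fun hp => hq ⟨p, hp, rfl⟩, by rw [Finset.image_insert]; congr!⟩

lemma IsFlat.preimage_quotient (hsc : IsSC faces) (hbr : BRep faces)
    {G : Set (Quotient τ)} (hG : IsFlat (quotFaces faces τ) G) :
    IsFlat faces (Quotient.mk τ ⁻¹' G) := by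
  intro I hI hIG p hp
  have hIG' : ↑(I.image (Quotient.mk τ)) ⊆ G := by
    simpa [Set.image_subset_iff] using hIG
  obtain ⟨Z, hZ, hZeq⟩ := hG _ ⟨I, hI, rfl⟩ hIG' _ hp
  have hpI : p ∉ I := fun h => hp (hIG h)
  have hmk_inj : Set.InjOn (Quotient.mk τ) ↑(insert p I) := by
    rw [Finset.coe_insert, Set.injOn_insert (by simpa using hpI)]
    refine ⟨fun a ha b hb h => hbr.injOn_cl hI ha hb (hτ a b (Quotient.exact h)), ?_⟩
    rintro ⟨a, ha, hap⟩
    exact hp (show Quotient.mk τ p ∈ G from hap ▸ hIG ha)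
  have hrep : ∀ y ∈ insert p I, ∃ z ∈ Z, Quotient.mk τ z = Quotient.mk τ y := fun y hy => by
    have : Quotient.mk τ y ∈ Z.image (Quotient.mk τ) := by
      simp only [← hZeq, Finset.mem_insert, Finset.mem_image]
      rcases Finset.mem_insert.mp hy with rfl | hy
      · exact Or.inl rfl
      · exact Or.inr ⟨y, hy, rfl⟩
    simpa using this
  choose! f hfZ hf using hrep
  refine hbr.mem_of_injOn (hsc.2 hI (Finset.empty_subset I)) hZ hfZ
    (fun a ha b hb h => hmk_inj ha hb ?_) fun y hy => hτ _ _ (Quotient.exact (hf y hy))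
  rw [← hf a ha, ← hf b hb, h]

end Quotient

theorem flats_eq_preimages_of_quot_flats_general
    {faces : Set (Finset V)} (hsc : IsSC faces) (hbr : BRep faces)
    (τ : Setoid V) (hτ : ∀ a b : V, τ.r a b → cl faces {a} = cl faces {b}) :
    {F : Set V | IsFlat faces F} =
      {S : Set V | ∃ G : Set (Quotient τ),
        IsFlat (quotFaces faces τ) G ∧ S = Quotient.mk τ ⁻¹' G} := by
  ext S
  constructor
  · intro hS
    exact ⟨_, hS.image_quotient hτ, (hS.preimage_image_quotient_eq hτ).symm⟩
  · rintro ⟨G, hG, rfl⟩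
    exact hG.preimage_quotient hτ hsc hbr

theorem flats_eq_preimages_of_quot_flats [Fintype V] [Nonempty V]
    {faces : Set (Finset V)} (hsc : IsSC faces) (hbr : BRep faces)
    (τ : Setoid V) (hτ : ∀ a b : V, τ.r a b → cl faces {a} = cl faces {b}) :
    {F : Set V | IsFlat faces F} =
      {S : Set V | ∃ G : Set (Quotient τ),
        IsFlat (quotFaces faces τ) G ∧ S = Quotient.mk τ ⁻¹' G} :=
  flats_eq_preimages_of_quot_flats_general hsc hbr τ hτ
end

section
/- Let H = (V,H) be a boolean representable simplicial complex and τ ⊆ η an equivalence relation on V with projection φ: V → V/τ. Then the quotient complex H/τ = (V/τ, {Xφ : X ∈ H}) is boolean representable. -/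
open scoped Classical

variable {V : Type}

/-!
A flat contains, with each point `a`, the closure `cl {a}`; since `τ ⊆ η`, every flat is therefore
a union of `τ`-classes. Projecting a boolean representation of `X` to `V/τ` then gives one of the
image of `X`: saturated flats map to flats, the chain stays strict, and the transversal stays a
transversal (and injective) because membership in a saturated set is decided by the class.
-/

section Saturation

variable {W : Type*} {f : V → W}

theorem strictMono_image_of_preimage_image {ι : Type*} [Preorder ι] {F : ι → Set V}
    (hmono : StrictMono F) (hsat : ∀ i, f ⁻¹' (f '' F i) = F i) :
    StrictMono fun i => f '' F i := by
  intro i j hij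
  refine (Set.image_mono (hmono hij).le).ssubset_of_ne fun h => (hmono hij).ne ?_
  rw [← hsat i, ← hsat j, h]

theorem mem_image_diff_of_preimage_image {A B : Set V} {a : V} (ha : a ∈ B \ A)
    (hA : f ⁻¹' (f '' A) = A) : f a ∈ f '' B \ f '' A :=
  ⟨Set.mem_image_of_mem f ha.1, fun h => ha.2 (hA ▸ h)⟩

theorem injective_comp_of_mem_succ_diff_castSucc {k : ℕ} {F : Fin (k + 1) → Set V}
    {x : Fin k → V} (hmono : Monotone F) (hsat : ∀ i, f ⁻¹' (f '' F i) = F i)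
    (hx : ∀ i, x i ∈ F i.succ \ F i.castSucc) : Function.Injective (f ∘ x) := by
  refine Function.Injective.of_lt_imp_ne fun i j hij heq => (hx j).2 ?_
  have hxi : x i ∈ F j.castSucc := hmono (Fin.succ_le_castSucc_iff.mpr hij) (hx i).1
  rw [← hsat j.castSucc]
  exact ⟨x i, hxi, heq⟩

end Saturation

section Flats

variable {faces : Set (Finset V)} {F : Set V}

theorem IsFlat.mem_iff_cl_singleton_subset (hF : IsFlat faces F) {a : V} :
    a ∈ F ↔ cl faces {a} ⊆ F :=
  ⟨fun ha => Set.sInter_subset_of_mem ⟨hF, Set.singleton_subset_iff.mpr ha⟩,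
    fun h => h fun _ hG => hG.2 rfl⟩

variable {τ : Setoid V}

theorem IsFlat.preimage_image_mk (hF : IsFlat faces F)
    (hτ : ∀ a b : V, τ.r a b → cl faces {a} = cl faces {b}) :
    Quotient.mk τ ⁻¹' (Quotient.mk τ '' F) = F := by
  refine Set.Subset.antisymm ?_ (Set.subset_preimage_image _ _)
  rintro b ⟨a, ha, hab⟩
  rw [hF.mem_iff_cl_singleton_subset, ← hτ a b (Quotient.exact hab),
    ← hF.mem_iff_cl_singleton_subset]
  exact ha

theorem IsFlat.image_mk (hF : IsFlat faces F)
    (hτ : ∀ a b : V, τ.r a b → cl faces {a} = cl faces {b}) :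
    IsFlat (quotFaces faces τ) (Quotient.mk τ '' F) := by
  rintro _ ⟨Z, hZ, rfl⟩ hZF p hp
  obtain ⟨v, rfl⟩ := Quotient.exists_rep p
  have hZ_sub : (Z : Set V) ⊆ F := by
    rw [← hF.preimage_image_mk hτ]
    intro z hz
    exact hZF (Finset.mem_coe.mpr (Finset.mem_image_of_mem _ hz))
  have hv : v ∉ F := fun hv => hp ⟨v, hv, rfl⟩
  exact ⟨insert v Z, hF Z hZ hZ_sub v hv, by ext; simp⟩

end Flats

theorem quot_brep_general
    {faces : Set (Finset V)} (hbr : BRep faces)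
    (τ : Setoid V) (hτ : ∀ a b : V, τ.r a b → cl faces {a} = cl faces {b}) :
    BRep (quotFaces faces τ) := by
  rintro _ ⟨X, hX, rfl⟩
  obtain ⟨k, F, x, hF, hmono, -, hx, rfl⟩ := hbr X hX
  have hsat : ∀ i, Quotient.mk τ ⁻¹' (Quotient.mk τ '' F i) = F i :=
    fun i => (hF i).preimage_image_mk hτ
  refine ⟨k, fun i => Quotient.mk τ '' F i, Quotient.mk τ ∘ x, fun i => (hF i).image_mk hτ,
    strictMono_image_of_preimage_image hmono hsat,
    injective_comp_of_mem_succ_diff_castSucc hmono.monotone hsat hx,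
    fun i => mem_image_diff_of_preimage_image (hx i) (hsat _), by ext; simp⟩

theorem quot_brep [Fintype V] [Nonempty V]
    {faces : Set (Finset V)} (hsc : IsSC faces) (hbr : BRep faces)
    (τ : Setoid V) (hτ : ∀ a b : V, τ.r a b → cl faces {a} = cl faces {b}) :
    BRep (quotFaces faces τ) :=
  quot_brep_general hbr τ hτ
end

section
/- Let M be an R × V boolean matrix representing a simplicial complex H = (V,H) (H is the set of M-independent column subsets, and all singletons are independent). For a, b ∈ V: columns a and b of M are equal if and only if {a,b} ∉ H or a = b. -/
open scoped Classical

variable {V : Type}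

def MIndep {R : Type} (M : R → V → Bool) (X : Finset V) : Prop :=
  ∃ (n : ℕ) (rows : Fin n → R) (cols : Fin n → V),
    Function.Injective rows ∧ Function.Injective cols ∧
    X = Finset.image cols Finset.univ ∧
    (∀ i : Fin n, M (rows i) (cols i) = true) ∧
    (∀ i j : Fin n, i < j → M (rows i) (cols j) = false)

section

variable {R : Type} {M : R → V → Bool}

namespace MIndep

variable {X : Finset V}

theorem exists_eq_true (hX : MIndep M X) {v : V} (hv : v ∈ X) : ∃ r, M r v = true := by
  obtain ⟨n, rows, cols, -, -, rfl, hdiag, -⟩ := hX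
  obtain ⟨i, -, rfl⟩ := Finset.mem_image.mp hv
  exact ⟨rows i, hdiag i⟩

/-- The row of the earlier of the two columns in the triangular order separates them. -/
theorem exists_row_ne (hX : MIndep M X) {a b : V} (ha : a ∈ X) (hb : b ∈ X) (hab : a ≠ b) :
    ∃ r, M r a ≠ M r b := by
  obtain ⟨n, rows, cols, -, -, rfl, hdiag, hupper⟩ := hX
  obtain ⟨i, -, rfl⟩ := Finset.mem_image.mp ha
  obtain ⟨j, -, rfl⟩ := Finset.mem_image.mp hb
  rcases lt_or_gt_of_ne (ne_of_apply_ne cols hab) with hij | hji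
  · exact ⟨rows i, by rw [hdiag i, hupper i j hij]; decide⟩
  · exact ⟨rows j, by rw [hdiag j, hupper j i hji]; decide⟩

end MIndep

theorem mIndep_pair {r r' : R} {a b : V}
    (hra : M r a = true) (hrb : M r b = false) (hr'b : M r' b = true) :
    MIndep M ({a, b} : Finset V) := by
  have hab : a ≠ b := by rintro rfl; simp_all
  have hrr' : r ≠ r' := by rintro rfl; simp_all
  refine ⟨2, ![r, r'], ![a, b], ?_, ?_, ?_, ?_, ?_⟩
  · intro i j; fin_cases i <;> fin_cases j <;> simp [hrr', hrr'.symm]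
  · intro i j; fin_cases i <;> fin_cases j <;> simp [hab, hab.symm]
  · ext v; simp [Fin.exists_fin_two, eq_comm]
  · intro i; fin_cases i <;> assumption
  · intro i j hij; fin_cases i <;> fin_cases j <;> simp_all

theorem mIndep_pair_iff {a b : V} (hab : a ≠ b)
    (ha : ∃ r, M r a = true) (hb : ∃ r, M r b = true) :
    MIndep M ({a, b} : Finset V) ↔ ∃ r, M r a ≠ M r b := by
  refine ⟨fun h => h.exists_row_ne (by simp) (by simp) hab, fun ⟨r, hr⟩ => ?_⟩
  obtain ⟨ra, hra⟩ := ha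
  obtain ⟨rb, hrb⟩ := hb
  cases hMa : M r a <;> cases hMb : M r b <;> simp only [hMa, hMb, ne_eq, not_true_eq_false] at hr
  · exact Finset.pair_comm a b ▸ mIndep_pair hMb hMa hra
  · exact mIndep_pair hMa hMb hrb

end

theorem equal_columns_iff_pair_not_face_general
    {R : Type} (M : R → V → Bool) {faces : Set (Finset V)}
    (hsc : IsSC faces) (hrep : faces = {X : Finset V | MIndep M X}) (a b : V) :
    (∀ r : R, M r a = M r b) ↔ (({a, b} : Finset V) ∉ faces ∨ a = b) := by
  by_cases hab : a = b
  · simp [hab]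
  have hcol (v : V) : ∃ r, M r v = true := by
    have hv := hsc.1 v
    rw [hrep] at hv
    exact hv.exists_eq_true (Finset.mem_singleton_self v)
  rw [hrep, Set.mem_ofPred_eq, mIndep_pair_iff hab (hcol a) (hcol b)]
  simp [hab]

theorem equal_columns_iff_pair_not_face [Fintype V] [Nonempty V]
    {R : Type} (M : R → V → Bool) {faces : Set (Finset V)}
    (hsc : IsSC faces) (hrep : faces = {X : Finset V | MIndep M X}) (a b : V) :
    (∀ r : R, M r a = M r b) ↔ (({a, b} : Finset V) ∉ faces ∨ a = b) :=
  equal_columns_iff_pair_not_face_general M hsc hrep a b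
end
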